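/- arXiv:1705.07702 — 5 statements merged into one kernel-verified Lean document; each statement's English description precedes it below -/
import Mathlib

section
/- For every r ∈ R, the basic open set X_r = {Q primary : r ∉ √Q} is quasi-compact in the Zariski topology on Prim(R): if X_r ⊆ ⋃_{i∈λ} X_{s_i}, then there is a finite subset Δ ⊆ λ with X_r ⊆ ⋃_{j∈Δ} X_{s_j}. -/
/-!
A prime ideal is primary and equals its radical, and the radical of an ideal is the
intersection of the primes containing it. Hence `X_r ⊆ ⋃ i ∈ S, X_{s i}` says exactly that
`r` lies in the radical of the ideal generated by the `s i` with `i ∈ S`. Some power `r ^ n`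
is then a finite combination of the `s i`, and the finitely many indices involved give `Δ`.
-/

open Set

namespace Ideal

variable {R : Type*} [CommRing R] {ι : Type*}

theorem mem_radical_span_image_iff {r : R} {s : ι → R} {S : Set ι} :
    r ∈ (span (s '' S)).radical ↔
      ∀ Q : Ideal R, Q.IsPrimary → r ∉ Q.radical → ∃ i ∈ S, s i ∉ Q.radical := by
  constructor
  · intro hr Q _ hrQ
    by_contra! hS
    have hle : span (s '' S) ≤ Q.radical := span_le.2 <| image_subset_iff.2 hS
    exact hrQ (radical_idem Q ▸ radical_mono hle hr)
  · intro h
    rw [radical_eq_sInf, mem_sInf]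
    rintro P ⟨hSP, hP⟩
    by_contra hrP
    obtain ⟨i, hi, hiP⟩ := h P hP.isPrimary (by rwa [hP.radical])
    exact hiP <| le_radical <| hSP <| subset_span ⟨i, hi, rfl⟩

theorem exists_finset_mem_radical_span_image {r : R} {s : ι → R}
    (hr : r ∈ (span (range s)).radical) : ∃ Δ : Finset ι, r ∈ (span (s '' Δ)).radical := by
  obtain ⟨n, hn⟩ := hr
  obtain ⟨c, hc⟩ := Finsupp.mem_span_range_iff_exists_finsupp.1 hn
  refine ⟨c.support, n, hc ▸ sum_mem _ fun i hi => ?_⟩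
  exact mul_mem_left _ _ <| subset_span ⟨i, hi, rfl⟩

end Ideal

theorem stmt_11 {R : Type*} [CommRing R] (r : R) {ι : Type*} (s : ι → R) :
    {Q : Ideal R | Q.IsPrimary ∧ r ∉ Q.radical} ⊆
        ⋃ i, {Q : Ideal R | Q.IsPrimary ∧ s i ∉ Q.radical} →
      ∃ Δ : Finset ι, {Q : Ideal R | Q.IsPrimary ∧ r ∉ Q.radical} ⊆
        ⋃ j ∈ Δ, {Q : Ideal R | Q.IsPrimary ∧ s j ∉ Q.radical} := by
  intro h
  have hr : r ∈ (Ideal.span (range s)).radical := by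
    rw [← image_univ, Ideal.mem_radical_span_image_iff]
    intro Q hQ hrQ
    obtain ⟨i, -, hi⟩ := mem_iUnion.1 (h ⟨hQ, hrQ⟩)
    exact ⟨i, mem_univ i, hi⟩
  obtain ⟨Δ, hΔ⟩ := Ideal.exists_finset_mem_radical_span_image hr
  refine ⟨Δ, fun Q ⟨hQ, hrQ⟩ => ?_⟩
  obtain ⟨j, hj, hjQ⟩ := Ideal.mem_radical_span_image_iff.1 hΔ Q hQ hrQ
  exact mem_biUnion hj ⟨hQ, hjQ⟩
end

section
/- Prim(R) with the Zariski topology (closed sets V_rad(I)) is a quasi-compact topological space. -/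
/-!
Sending a primary ideal to its radical is a map onto `PrimeSpectrum R` (every prime is primary
and is its own radical), and by definition of the closed sets `V_rad(I)` the topology of
`PrimarySpectrum R` is the one induced by this map. Quasi-compactness is therefore inherited from
the prime spectrum.
-/

def PrimarySpectrum (R : Type*) [CommRing R] := {Q : Ideal R // Q.IsPrimary}

def primVRad {R : Type*} [CommRing R] (I : Ideal R) : Set (PrimarySpectrum R) :=
  {Q | I ≤ Q.1.radical}

instance (R : Type*) [CommRing R] : TopologicalSpace (PrimarySpectrum R) :=
  TopologicalSpace.generateFrom {U | ∃ I : Ideal R, U = (primVRad I)ᶜ}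

namespace PrimarySpectrum

variable {R : Type*} [CommRing R]

def toPrimeSpectrum (Q : PrimarySpectrum R) : PrimeSpectrum R :=
  ⟨Q.1.radical, Ideal.isPrime_radical Q.2⟩

theorem preimage_zeroLocus (I : Ideal R) :
    toPrimeSpectrum ⁻¹' PrimeSpectrum.zeroLocus I = primVRad I :=
  rfl

theorem toPrimeSpectrum_surjective : Function.Surjective (toPrimeSpectrum (R := R)) :=
  fun P => ⟨⟨P.asIdeal, P.isPrime.isPrimary⟩, PrimeSpectrum.ext P.isPrime.radical⟩

theorem isInducing_toPrimeSpectrum : Topology.IsInducing (toPrimeSpectrum (R := R)) := by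
  refine ⟨?_⟩
  rw [← TopologicalSpace.generateFrom_setOfPred_isOpen (t := PrimeSpectrum.zariskiTopology),
    induced_generateFrom_eq]
  refine congrArg _ (Set.ext fun U => ⟨?_, ?_⟩)
  · rintro ⟨I, rfl⟩
    exact ⟨(PrimeSpectrum.zeroLocus I)ᶜ, (PrimeSpectrum.isClosed_zeroLocus _).isOpen_compl,
      by rw [Set.preimage_compl, preimage_zeroLocus]⟩
  · rintro ⟨V, hV, rfl⟩
    obtain ⟨s, hs⟩ := (PrimeSpectrum.isOpen_iff V).mp hV
    refine ⟨Ideal.span s, ?_⟩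
    rw [← preimage_zeroLocus, PrimeSpectrum.zeroLocus_span, ← hs, ← Set.preimage_compl,
      compl_compl]

end PrimarySpectrum

theorem stmt_12 (R : Type*) [CommRing R] : CompactSpace (PrimarySpectrum R) := by
  refine ⟨?_⟩
  rw [PrimarySpectrum.isInducing_toPrimeSpectrum.isCompact_iff, Set.image_univ,
    PrimarySpectrum.toPrimeSpectrum_surjective.range_eq]
  exact isCompact_univ
end

section
/- If a commutative ring R in which every nonzero prime ideal is maximal has three distinct maximal ideals M₁, M₂, M₃, then R does not satisfy condition (*): there exist nonzero r, s₁, s₂ ∈ R with X_r ⊆ X_{s₁} ∪ X_{s₂} but X_r ⊄ X_{s₁} and X_r ⊄ X_{s₂}. -/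
/-!
Take `s₁ ∈ M₁ \ M₂`, `s₂ ∈ M₂ \ M₁` and `r = s₁ + s₂`. A primary ideal whose radical misses
`r` cannot have both `s₁` and `s₂` in its radical, so `X_r ⊆ X_{s₁} ∪ X_{s₂}`. On the other hand
`r ∉ M₁ ∪ M₂`, so the prime ideal `M₁` lies in `X_r` but not in `X_{s₁}`, and likewise `M₂` lies
in `X_r` but not in `X_{s₂}`.
-/

namespace Ideal

section CommSemiring

variable {R : Type*} [CommSemiring R]

/-- The paper's `X_r`. -/
def primaryAvoiding (r : R) : Set (Ideal R) :=
  {Q | Q.IsPrimary ∧ r ∉ Q.radical}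

theorem primaryAvoiding_add_subset (a b : R) :
    primaryAvoiding (a + b) ⊆ primaryAvoiding a ∪ primaryAvoiding b := by
  rintro Q ⟨hQ, hab⟩
  by_cases ha : a ∈ Q.radical
  · exact Or.inr ⟨hQ, fun hb => hab (Q.radical.add_mem ha hb)⟩
  · exact Or.inl ⟨hQ, ha⟩

theorem IsPrime.mem_primaryAvoiding_iff {P : Ideal R} (hP : P.IsPrime) {r : R} :
    P ∈ primaryAvoiding r ↔ r ∉ P := by
  simp [primaryAvoiding, hP.isPrimary, hP.radical]

theorem not_primaryAvoiding_subset_of_isPrime {P : Ideal R} (hP : P.IsPrime) {r s : R}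
    (hr : r ∉ P) (hs : s ∈ P) : ¬ primaryAvoiding r ⊆ primaryAvoiding s := fun h =>
  (hP.mem_primaryAvoiding_iff.mp (h (hP.mem_primaryAvoiding_iff.mpr hr))) hs

end CommSemiring

theorem IsMaximal.exists_mem_not_mem_of_ne {R : Type*} [Semiring R] {M N : Ideal R}
    (hM : M.IsMaximal) (hN : N.IsMaximal) (hMN : M ≠ N) : ∃ s ∈ M, s ∉ N :=
  SetLike.not_le_iff_exists.mp fun hle => hMN (hM.eq_of_le hN.ne_top hle)

end Ideal

open Ideal

theorem stmt_13_general {R : Type*} [CommRing R]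
    (M₁ M₂ : Ideal R) (h₁ : M₁.IsMaximal) (h₂ : M₂.IsMaximal)
    (h₁₂ : M₁ ≠ M₂) :
    ∃ r s₁ s₂ : R, r ≠ 0 ∧ s₁ ≠ 0 ∧ s₂ ≠ 0 ∧
      {Q : Ideal R | Q.IsPrimary ∧ r ∉ Q.radical} ⊆
        {Q : Ideal R | Q.IsPrimary ∧ s₁ ∉ Q.radical} ∪
          {Q : Ideal R | Q.IsPrimary ∧ s₂ ∉ Q.radical} ∧
      ¬ {Q : Ideal R | Q.IsPrimary ∧ r ∉ Q.radical} ⊆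
          {Q : Ideal R | Q.IsPrimary ∧ s₁ ∉ Q.radical} ∧
      ¬ {Q : Ideal R | Q.IsPrimary ∧ r ∉ Q.radical} ⊆
          {Q : Ideal R | Q.IsPrimary ∧ s₂ ∉ Q.radical} := by
  obtain ⟨s₁, hs₁M₁, hs₁M₂⟩ := h₁.exists_mem_not_mem_of_ne h₂ h₁₂
  obtain ⟨s₂, hs₂M₂, hs₂M₁⟩ := h₂.exists_mem_not_mem_of_ne h₁ h₁₂.symm
  have hrM₁ : s₁ + s₂ ∉ M₁ := by rwa [M₁.add_mem_iff_right hs₁M₁]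
  have hrM₂ : s₁ + s₂ ∉ M₂ := by rwa [M₂.add_mem_iff_left hs₂M₂]
  exact ⟨s₁ + s₂, s₁, s₂, ne_of_mem_of_not_mem M₁.zero_mem hrM₁ |>.symm,
    ne_of_mem_of_not_mem M₂.zero_mem hs₁M₂ |>.symm, ne_of_mem_of_not_mem M₁.zero_mem hs₂M₁ |>.symm,
    primaryAvoiding_add_subset s₁ s₂,
    not_primaryAvoiding_subset_of_isPrime h₁.isPrime hrM₁ hs₁M₁,
    not_primaryAvoiding_subset_of_isPrime h₂.isPrime hrM₂ hs₂M₂⟩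

theorem stmt_13 {R : Type*} [CommRing R]
    (hpm : ∀ P : Ideal R, P.IsPrime → P ≠ ⊥ → P.IsMaximal)
    (M₁ M₂ M₃ : Ideal R) (h₁ : M₁.IsMaximal) (h₂ : M₂.IsMaximal) (h₃ : M₃.IsMaximal)
    (h₁₂ : M₁ ≠ M₂) (h₁₃ : M₁ ≠ M₃) (h₂₃ : M₂ ≠ M₃) :
    ∃ r s₁ s₂ : R, r ≠ 0 ∧ s₁ ≠ 0 ∧ s₂ ≠ 0 ∧
      {Q : Ideal R | Q.IsPrimary ∧ r ∉ Q.radical} ⊆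
        {Q : Ideal R | Q.IsPrimary ∧ s₁ ∉ Q.radical} ∪
          {Q : Ideal R | Q.IsPrimary ∧ s₂ ∉ Q.radical} ∧
      ¬ {Q : Ideal R | Q.IsPrimary ∧ r ∉ Q.radical} ⊆
          {Q : Ideal R | Q.IsPrimary ∧ s₁ ∉ Q.radical} ∧
      ¬ {Q : Ideal R | Q.IsPrimary ∧ r ∉ Q.radical} ⊆
          {Q : Ideal R | Q.IsPrimary ∧ s₂ ∉ Q.radical} :=
  stmt_13_general M₁ M₂ h₁ h₂ h₁₂
end

section
/- A commutative ring R is a P-ring (every primary ideal is maximal) if and only if Prim(R) is a T₀-space. -/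
/-! Points of `Prim(R)` with equal radicals are inseparable, while `V_rad(√Q)` separates
points with different radicals; so `Prim(R)` is T₀ exactly when every primary ideal is prime.
Such a ring is zero-dimensional: if `a ∉ P` for a prime `P` and `p` is a minimal prime of
`I = P + (a²)`, then the `p`-primary ideal `I R_p ∩ R` is prime, hence contains `a`, i.e.
`s a ∈ P + (a²)` for some `s ∉ p`. Cancelling `a` modulo `P` gives `s ∈ P + (a) ⊆ p`, a
contradiction; so `P + (a²) = R` and `a` is invertible modulo `P`. -/

namespace PrimarySpectrum

variable {R : Type*} [CommRing R]

theorem specializes_iff {x y : PrimarySpectrum R} : x ⤳ y ↔ x.1.radical ≤ y.1.radical := by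
  rw [specializes_iff_pure, ← Filter.map_id (f := pure x), ← Filter.Tendsto,
    TopologicalSpace.tendsto_nhds_generateFrom_iff]
  simp only [Set.mem_ofPred_eq, forall_exists_index]
  refine ⟨fun h ↦ ?_, ?_⟩
  · by_contra hxy
    exact h _ x.1.radical rfl hxy (le_refl x.1.radical)
  · rintro hxy _ I rfl hy hx
    exact hy (hx.trans hxy)

theorem inseparable_iff {x y : PrimarySpectrum R} :
    Inseparable x y ↔ x.1.radical = y.1.radical := by
  rw [inseparable_iff_specializes_and, specializes_iff, specializes_iff, le_antisymm_iff]

theorem t0Space_iff_forall_isPrimary_isPrime :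
    T0Space (PrimarySpectrum R) ↔ ∀ Q : Ideal R, Q.IsPrimary → Q.IsPrime := by
  rw [t0Space_iff_inseparable]
  refine ⟨fun h Q hQ ↦ ?_, fun h x y hxy ↦ ?_⟩
  · have hrad : Q.radical.IsPrime := Ideal.isPrime_radical hQ
    have hQ_eq : Q = Q.radical := congrArg Subtype.val <|
      h ⟨Q, hQ⟩ ⟨Q.radical, hrad.isPrimary⟩ (inseparable_iff.2 Q.radical_idem.symm)
    rwa [← hQ_eq] at hrad
  · rw [inseparable_iff, (h _ x.2).radical, (h _ y.2).radical] at hxy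
    exact Subtype.ext hxy

end PrimarySpectrum

namespace Ideal

variable {R : Type*} [CommRing R]

theorem isPrimary_comap_map_localization_atPrime {I p : Ideal R} [p.IsPrime]
    (hp : p ∈ I.minimalPrimes) :
    ((I.map (algebraMap R (Localization.AtPrime p))).comap
      (algebraMap R (Localization.AtPrime p))).IsPrimary := by
  refine IsPrimary.comap (isPrimary_of_isMaximal_radical ?_) _
  rw [IsLocalization.AtPrime.radical_map_of_mem_minimalPrimes _ p I hp,
    Localization.AtPrime.map_eq_maximalIdeal]
  exact IsLocalRing.maximalIdeal.isMaximal _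

theorem sup_span_sq_eq_top_of_forall_isPrimary_isPrime
    (h : ∀ Q : Ideal R, Q.IsPrimary → Q.IsPrime) {P : Ideal R} (hP : P.IsPrime) {a : R}
    (ha : a ∉ P) : P ⊔ span {a ^ 2} = ⊤ := by
  set I := P ⊔ span {a ^ 2}
  by_contra hI
  obtain ⟨p, hp⟩ := nonempty_minimalPrimes hI
  have hp_prime : p.IsPrime := hp.isPrime
  have ha_sq : a ^ 2 ∈ I := mem_sup_right (mem_span_singleton_self _)
  have ha_p : a ∈ p := hp_prime.mem_of_pow_mem 2 (hp.le ha_sq)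
  obtain ⟨s, hs, hsa⟩ := (IsLocalization.algebraMap_mem_map_algebraMap_iff p.primeCompl _ I a).1
    ((h _ (isPrimary_comap_map_localization_atPrime hp)).mem_of_pow_mem 2 (le_comap_map ha_sq))
  obtain ⟨y, hy, _, hz, hsa⟩ := Submodule.mem_sup.1 hsa
  obtain ⟨t, rfl⟩ := mem_span_singleton'.1 hz
  have hst : s - t * a ∈ P := by
    refine (hP.mem_or_mem ?_).resolve_right ha
    rwa [show (s - t * a) * a = y by linear_combination -hsa]
  have hs_p : s = (s - t * a) + t * a := by ring
  exact hs (hs_p ▸ add_mem (hp.le (mem_sup_left hst)) (mul_mem_left _ t ha_p))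

theorem IsPrime.isMaximal_of_forall_isPrimary_isPrime
    (h : ∀ Q : Ideal R, Q.IsPrimary → Q.IsPrime) {P : Ideal R} (hP : P.IsPrime) :
    P.IsMaximal := by
  refine isMaximal_iff.2 ⟨(ne_top_iff_one P).1 hP.ne_top, fun J a hPJ ha haJ ↦ ?_⟩
  have hle : P ⊔ span {a ^ 2} ≤ J :=
    sup_le hPJ ((span_singleton_le_iff_mem J).2 (J.pow_mem_of_mem haJ 2 two_pos))
  rw [sup_span_sq_eq_top_of_forall_isPrimary_isPrime h hP ha, top_le_iff] at hle
  exact hle ▸ Submodule.mem_top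

end Ideal

theorem stmt_17 (R : Type*) [CommRing R] :
    (∀ Q : Ideal R, Q.IsPrimary → Q.IsMaximal) ↔ T0Space (PrimarySpectrum R) := by
  rw [PrimarySpectrum.t0Space_iff_forall_isPrimary_isPrime]
  exact ⟨fun h Q hQ ↦ (h Q hQ).isPrime,
    fun h Q hQ ↦ (h Q hQ).isMaximal_of_forall_isPrimary_isPrime h⟩
end

section
/- Prim(R) is an irreducible topological space if and only if the nilradical N(R) of R is a primary ideal of R. -/
theorem Topology.IsInducing.irreducibleSpace_iff_of_surjective {X Y : Type*}
    [TopologicalSpace X] [TopologicalSpace Y] {f : X → Y} (hf : IsInducing f)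
    (hsurj : Function.Surjective f) : IrreducibleSpace X ↔ IrreducibleSpace Y := by
  refine ⟨fun _ ↦ hsurj.irreducibleSpace hf.continuous, fun hY ↦ ?_⟩
  refine { isPreirreducible_univ := ?_, toNonempty := hsurj.nonempty }
  rintro u v hu hv ⟨x, -, hxu⟩ ⟨y, -, hyv⟩
  obtain ⟨U, hU, rfl⟩ := hf.isOpen_iff.mp hu
  obtain ⟨V, hV, rfl⟩ := hf.isOpen_iff.mp hv
  obtain ⟨z, -, hzU, hzV⟩ :=
    hY.isPreirreducible_univ U V hU hV ⟨f x, trivial, hxu⟩ ⟨f y, trivial, hyv⟩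
  obtain ⟨w, rfl⟩ := hsurj z
  exact ⟨w, trivial, hzU, hzV⟩

theorem Ideal.IsRadical.isPrimary_iff_isPrime {R : Type*} [CommSemiring R] {I : Ideal R}
    (hI : I.IsRadical) : I.IsPrimary ↔ I.IsPrime :=
  ⟨fun h ↦ hI.radical ▸ Ideal.isPrime_radical h, Ideal.IsPrime.isPrimary⟩

namespace PrimarySpectrum

variable {R : Type*} [CommRing R]

def radical (Q : PrimarySpectrum R) : PrimeSpectrum R :=
  ⟨Q.1.radical, Ideal.isPrime_radical Q.2⟩

theorem radical_surjective : Function.Surjective (radical (R := R)) :=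
  fun p ↦ ⟨⟨p.1, p.2.isPrimary⟩, PrimeSpectrum.ext p.2.radical⟩

theorem primVRad_eq_preimage_zeroLocus (I : Ideal R) :
    primVRad I = radical ⁻¹' PrimeSpectrum.zeroLocus I :=
  rfl

theorem isInducing_radical : Topology.IsInducing (radical (R := R)) := by
  refine ⟨le_antisymm (fun s hs ↦ ?_) (le_generateFrom ?_)⟩
  · obtain ⟨U, hU, rfl⟩ := isOpen_induced_iff.mp hs
    obtain ⟨I, hI⟩ := (PrimeSpectrum.isClosed_iff_zeroLocus_ideal Uᶜ).mp hU.isClosed_compl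
    refine TopologicalSpace.GenerateOpen.basic _ ⟨I, ?_⟩
    rw [primVRad_eq_preimage_zeroLocus, ← hI, Set.preimage_compl, compl_compl]
  · rintro _ ⟨I, rfl⟩
    rw [primVRad_eq_preimage_zeroLocus, ← Set.preimage_compl]
    exact isOpen_induced (PrimeSpectrum.isClosed_zeroLocus _).isOpen_compl

end PrimarySpectrum

theorem stmt_18 (R : Type*) [CommRing R] :
    IrreducibleSpace (PrimarySpectrum R) ↔ (nilradical R).IsPrimary := by
  rw [PrimarySpectrum.isInducing_radical.irreducibleSpace_iff_of_surjective
    PrimarySpectrum.radical_surjective, PrimeSpectrum.irreducibleSpace_iff_isPrime_nilradical]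
  exact (Ideal.radical_isRadical (0 : Ideal R)).isPrimary_iff_isPrime.symm
end
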